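/- arXiv:2602.19963 — 8 statements merged into one kernel-verified Lean document; each statement's English description precedes it below -/
import Mathlib

section
/- For all real γ with 1 ≤ γ ≤ 3 and all real M with -1 < M < 1, the polynomial P_T(γ,M) = 9γ(γ+1) - (γ-1)γM⁴ + 2(2γ²+γ-3)M² + 12γ(γ+1)M + 6 is strictly positive. -/
/-! The polynomial vanishes at `M = -1`. After dividing out `M + 1`, the cofactor is at least
`6γ² + 6γ + 12` on `[-1, 1]` once `γ ≥ 1`: its cubic term is nonnegative and its linear
term is at least `-3 (γ - 1)(γ + 2)`. -/

def traceCofactor (γ M : ℝ) : ℝ :=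
  (γ - 1) * γ * M ^ 2 * (1 - M) + 3 * (γ - 1) * (γ + 2) * M + (9 * γ ^ 2 + 9 * γ + 6)

theorem trace_numerator_eq_mul_traceCofactor (γ M : ℝ) :
    9*γ*(γ+1) - (γ-1)*γ*M^4 + 2*(2*γ^2+γ-3)*M^2 + 12*γ*(γ+1)*M + 6
      = (M + 1) * traceCofactor γ M := by
  unfold traceCofactor
  ring

theorem traceCofactor_pos {γ M : ℝ} (hγ : 1 ≤ γ) (hM1 : -1 ≤ M) (hM2 : M ≤ 1) :
    0 < traceCofactor γ M := by
  have hγ0 : 0 ≤ γ - 1 := sub_nonneg.2 hγ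
  have hcubic : 0 ≤ (γ - 1) * γ * M ^ 2 * (1 - M) := by
    have : 0 ≤ 1 - M := sub_nonneg.2 hM2
    positivity
  have hlinear : -(3 * (γ - 1) * (γ + 2)) ≤ 3 * (γ - 1) * (γ + 2) * M := by
    have : 0 ≤ 3 * (γ - 1) * (γ + 2) := by positivity
    nlinarith
  unfold traceCofactor
  nlinarith

theorem stmt_0_general (γ M : ℝ) (hγ1 : 1 ≤ γ) (hM1 : -1 < M) (hM2 : M < 1) :
    0 < 9*γ*(γ+1) - (γ-1)*γ*M^4 + 2*(2*γ^2+γ-3)*M^2 + 12*γ*(γ+1)*M + 6 := by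
  rw [trace_numerator_eq_mul_traceCofactor]
  exact mul_pos (by linarith) (traceCofactor_pos hγ1 hM1.le hM2.le)

theorem stmt_0 (γ M : ℝ) (hγ1 : 1 ≤ γ) (hγ3 : γ ≤ 3) (hM1 : -1 < M) (hM2 : M < 1) :
    0 < 9*γ*(γ+1) - (γ-1)*γ*M^4 + 2*(2*γ^2+γ-3)*M^2 + 12*γ*(γ+1)*M + 6 :=
  stmt_0_general γ M hγ1 hM1 hM2
end

section
/- For all real γ with 1 ≤ γ ≤ 3 and all real M with -1 < M < 1, the expression R(γ,M) = (γ-1)γM²(1-M) + 3(γ-1)(γ+2)M + 9γ(γ+1) + 6 is strictly positive. -/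
theorem stmt_2_general (γ M : ℝ) (hγ1 : 1 ≤ γ) (hM1 : -1 < M) (hM2 : M < 1) :
    0 < (γ-1)*γ*M^2*(1-M) + 3*(γ-1)*(γ+2)*M + 9*γ*(γ+1) + 6 := by
  have hγ : 0 ≤ γ - 1 := sub_nonneg.2 hγ1
  have split : (γ-1)*γ*M^2*(1-M) + 3*(γ-1)*(γ+2)*M + 9*γ*(γ+1) + 6
      = (γ-1)*γ*M^2*(1-M) + 3*(γ-1)*(γ+2)*(M+1) + 6*(γ^2+γ+2) := by ring
  have h_cubic : 0 ≤ (γ-1)*γ*M^2*(1-M) :=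
    mul_nonneg (mul_nonneg (mul_nonneg hγ (by linarith)) (sq_nonneg M)) (by linarith)
  have h_linear : 0 ≤ 3*(γ-1)*(γ+2)*(M+1) :=
    mul_nonneg (mul_nonneg (mul_nonneg zero_le_three hγ) (by linarith)) (by linarith)
  have h_const : 0 < 6*(γ^2+γ+2) := by nlinarith [sq_nonneg γ]
  rw [split]
  linarith

theorem stmt_2 (γ M : ℝ) (hγ1 : 1 ≤ γ) (hγ3 : γ ≤ 3) (hM1 : -1 < M) (hM2 : M < 1) :
    0 < (γ-1)*γ*M^2*(1-M) + 3*(γ-1)*(γ+2)*M + 9*γ*(γ+1) + 6 :=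
  stmt_2_general γ M hγ1 hM1 hM2
end

section
/- For all real γ with 1 ≤ γ ≤ 3 and all real M with -1 ≤ M ≤ 1, the polynomial P_S(γ,M) = -3γ² - 14γ + 4(γ-1)γM² + (-9γ²+10γ+3)M - 3 is non-positive, with equality only when γ = 3 and M = -1. -/
/-!
`P_S` is a quadratic in `M` with leading coefficient `4γ(γ - 1) ≥ 0`, so on `[-1, 1]` it lies below
its chord. The chord's endpoints are `P_S(γ, -1) = 2(5γ + 1)(γ - 3)` and `P_S(γ, 1) = -8γ(γ + 1)`,
both nonpositive, and the second is strictly negative; hence `P_S ≤ 0`, with equality only at the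
endpoint `M = -1` where also `γ = 3`.
-/

noncomputable def vanLeerPS (γ M : ℝ) : ℝ :=
  -3*γ^2 - 14*γ + 4*(γ-1)*γ*M^2 + (-9*γ^2+10*γ+3)*M - 3

theorem vanLeerPS_eq_chord_sub (γ M : ℝ) :
    vanLeerPS γ M =
      (1 - M) * ((5*γ + 1) * (γ - 3)) + (1 + M) * (-4 * γ * (γ + 1))
        - 4 * γ * (γ - 1) * ((1 - M) * (1 + M)) := by
  unfold vanLeerPS; ring

theorem vanLeerPS_chord_terms_nonpos {γ M : ℝ} (hγ1 : 1 ≤ γ) (hγ3 : γ ≤ 3)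
    (hM1 : -1 ≤ M) (hM2 : M ≤ 1) :
    (1 - M) * ((5*γ + 1) * (γ - 3)) ≤ 0 ∧ (1 + M) * (-4 * γ * (γ + 1)) ≤ 0 ∧
      0 ≤ 4 * γ * (γ - 1) * ((1 - M) * (1 + M)) := by
  refine ⟨?_, ?_, ?_⟩
  · exact mul_nonpos_of_nonneg_of_nonpos (by linarith)
      (mul_nonpos_of_nonneg_of_nonpos (by linarith) (by linarith))
  · exact mul_nonpos_of_nonneg_of_nonpos (by linarith) (by nlinarith)
  · exact mul_nonneg (by nlinarith) (mul_nonneg (by linarith) (by linarith))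

theorem vanLeerPS_nonpos {γ M : ℝ} (hγ1 : 1 ≤ γ) (hγ3 : γ ≤ 3)
    (hM1 : -1 ≤ M) (hM2 : M ≤ 1) :
    vanLeerPS γ M ≤ 0 := by
  obtain ⟨h₁, h₂, h₃⟩ := vanLeerPS_chord_terms_nonpos hγ1 hγ3 hM1 hM2
  rw [vanLeerPS_eq_chord_sub]
  linarith

theorem eq_three_and_neg_one_of_vanLeerPS_eq_zero {γ M : ℝ} (hγ1 : 1 ≤ γ) (hγ3 : γ ≤ 3)
    (hM1 : -1 ≤ M) (hM2 : M ≤ 1)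
    (h : vanLeerPS γ M = 0) : γ = 3 ∧ M = -1 := by
  obtain ⟨h₁, h₂, h₃⟩ := vanLeerPS_chord_terms_nonpos hγ1 hγ3 hM1 hM2
  rw [vanLeerPS_eq_chord_sub] at h
  have hM : M = -1 := by
    have hright : (1 + M) * (-4 * γ * (γ + 1)) = 0 := by linarith
    have hcoeff : -4 * γ * (γ + 1) ≠ 0 := by nlinarith
    linarith [(mul_eq_zero.1 hright).resolve_right hcoeff]
  subst hM
  have hleft : (5*γ + 1) * (γ - 3) = 0 := by nlinarith
  exact ⟨by linarith [(mul_eq_zero.1 hleft).resolve_left (by linarith)], rfl⟩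

theorem stmt_3 (γ M : ℝ) (hγ1 : 1 ≤ γ) (hγ3 : γ ≤ 3) (hM1 : -1 ≤ M) (hM2 : M ≤ 1) :
    (-3*γ^2 - 14*γ + 4*(γ-1)*γ*M^2 + (-9*γ^2+10*γ+3)*M - 3 ≤ 0) ∧
    (-3*γ^2 - 14*γ + 4*(γ-1)*γ*M^2 + (-9*γ^2+10*γ+3)*M - 3 = 0 → γ = 3 ∧ M = -1) :=
  ⟨vanLeerPS_nonpos hγ1 hγ3 hM1 hM2, eq_three_and_neg_one_of_vanLeerPS_eq_zero hγ1 hγ3 hM1 hM2⟩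
end

section
/- For all real γ with 1 ≤ γ ≤ 3, all real M with -1 < M < 1 and all real a > 0, the quantity S⁺_vl = -(a²(M+1)³/(32γ(γ+1)))·(-3γ² - 14γ + 4(γ-1)γM² + (-9γ²+10γ+3)M - 3) is strictly positive. -/
/-
Up to the positive factor a²(M+1)³/(32γ(γ+1)), the quantity is minus the quadratic
P(γ, M) = -3γ² - 14γ + 4(γ-1)γM² + (-9γ²+10γ+3)M - 3, and P is a combination with negative
coefficients of products that are nonnegative on the region, one of them strictly positive:
P = -4γ(γ-1)(1-M)(1+M) - (3-γ)(5γ+1)(1-M) - 4γ(γ+1)(1+M).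
-/

theorem vanLeer_factor_eq (γ M : ℝ) :
    -3*γ^2 - 14*γ + 4*(γ-1)*γ*M^2 + (-9*γ^2+10*γ+3)*M - 3 =
      -(4*γ*(γ-1)*(1-M)*(1+M) + (3-γ)*(5*γ+1)*(1-M) + 4*γ*(γ+1)*(1+M)) := by
  ring

theorem vanLeer_factor_neg {γ M : ℝ} (hγ1 : 1 ≤ γ) (hγ3 : γ ≤ 3) (hM1 : -1 < M) (hM2 : M ≤ 1) :
    -3*γ^2 - 14*γ + 4*(γ-1)*γ*M^2 + (-9*γ^2+10*γ+3)*M - 3 < 0 := by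
  rw [vanLeer_factor_eq, neg_neg_iff_pos]
  have hγ : 0 < γ := by linarith
  have hM : 0 < 1 + M := by linarith
  have h₁ : 0 ≤ 4*γ*(γ-1)*(1-M)*(1+M) := by
    have : 0 ≤ γ - 1 := by linarith
    have : 0 ≤ 1 - M := by linarith
    positivity
  have h₂ : 0 ≤ (3-γ)*(5*γ+1)*(1-M) := by
    have : 0 ≤ 3 - γ := by linarith
    have : 0 ≤ 1 - M := by linarith
    positivity
  have h₃ : 0 < 4*γ*(γ+1)*(1+M) := by positivity
  linarith

theorem stmt_4 (γ M a : ℝ) (hγ1 : 1 ≤ γ) (hγ3 : γ ≤ 3) (hM1 : -1 < M) (hM2 : M < 1)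
    (ha : 0 < a) :
    0 < -(a^2*(M+1)^3/(32*γ*(γ+1))) *
      (-3*γ^2 - 14*γ + 4*(γ-1)*γ*M^2 + (-9*γ^2+10*γ+3)*M - 3) := by
  have hγ : 0 < γ := by linarith
  have hM : 0 < M + 1 := by linarith
  have hprefactor : 0 < a^2*(M+1)^3/(32*γ*(γ+1)) := by positivity
  exact mul_pos_of_neg_of_neg (neg_neg_of_pos hprefactor)
    (vanLeer_factor_neg hγ1 hγ3 hM1 hM2.le)
end

section
/- For every γ > 1 and every M ∈ (-1,1), the trace T⁺_lin = (a/(8γ))·[-γ²(M²-3) + γ(7M²+12M+3) + 4] of the linear-pressure AUSM Jacobian is strictly positive, provided also γ ≤ 3 and a > 0. -/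
theorem ausm_trace_bracket_eq_sum_sq (γ M : ℝ) :
    -γ^2*(M^2-3) + γ*(7*M^2+12*M+3) + 4 = γ*(2*M+3)^2 + γ*(3-γ)*M^2 + 3*(γ-1)^2 + 1 := by
  ring

theorem one_le_ausm_trace_bracket {γ : ℝ} (M : ℝ) (hγ0 : 0 ≤ γ) (hγ3 : γ ≤ 3) :
    1 ≤ -γ^2*(M^2-3) + γ*(7*M^2+12*M+3) + 4 := by
  rw [ausm_trace_bracket_eq_sum_sq]
  have h₁ : 0 ≤ γ*(2*M+3)^2 := by positivity
  have h₂ : 0 ≤ γ*(3-γ)*M^2 := mul_nonneg (mul_nonneg hγ0 (by linarith)) (sq_nonneg M)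
  have h₃ : 0 ≤ 3*(γ-1)^2 := by positivity
  linarith

theorem stmt_5_general (γ M a : ℝ) (hγ1 : 1 < γ) (hγ3 : γ ≤ 3)
    (ha : 0 < a) :
    0 < (a/(8*γ)) * (-γ^2*(M^2-3) + γ*(7*M^2+12*M+3) + 4) := by
  have hγ0 : 0 < γ := by linarith
  exact mul_pos (div_pos ha (by positivity))
    (zero_lt_one.trans_le (one_le_ausm_trace_bracket M hγ0.le hγ3))

theorem stmt_5 (γ M a : ℝ) (hγ1 : 1 < γ) (hγ3 : γ ≤ 3) (hM1 : -1 < M) (hM2 : M < 1)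
    (ha : 0 < a) :
    0 < (a/(8*γ)) * (-γ^2*(M^2-3) + γ*(7*M^2+12*M+3) + 4) :=
  stmt_5_general γ M a hγ1 hγ3 ha
end

section
/- For every γ with 1 < γ < 3 there exists a unique M₀ ∈ (-1,0) such that the quadratic P_S(M) = (3γ²-9γ)M² + (-2γ²-10γ)M + (-5γ²+γ-2) satisfies P_S(M₀) = 0, P_S(M) > 0 for M ∈ (-1,M₀), and P_S(M) < 0 for M ∈ (M₀,1). -/
/-!
`P_S(-1) = 2γ - 2 > 0 > P_S(0)`, and since `P_S` is concave with `P_S'(-1) = 8γ(1 - γ) < 0`, it is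
strictly decreasing on `[-1, 1]`. The intermediate value theorem gives the root `M₀ ∈ (-1, 0)`, and
strict monotonicity gives both the signs on either side of it and its uniqueness.
-/

open Set

/-- On `[x₀, ∞)` the slope `a (x + y) + b` of a chord of `a x² + b x + c` is below `2 a x₀ + b`. -/
theorem strictAntiOn_quadratic_Ici {a b c x₀ : ℝ} (ha : a < 0) (hx₀ : 2 * a * x₀ + b ≤ 0) :
    StrictAntiOn (fun x => a * x ^ 2 + b * x + c) (Ici x₀) := by
  intro x hx y hy hxy
  have hslope : a * (x + y) + b < 0 := by
    nlinarith [mul_lt_mul_of_neg_left (show 2 * x₀ < x + y by linarith [mem_Ici.1 hx, mem_Ici.1 hy]) ha]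
  have hchord : (a * y ^ 2 + b * y + c) - (a * x ^ 2 + b * x + c) = (y - x) * (a * (x + y) + b) := by
    ring
  nlinarith [mul_neg_of_pos_of_neg (sub_pos.2 hxy) hslope]

theorem StrictAntiOn.existsUnique_sign_change {f : ℝ → ℝ} {a b c : ℝ}
    (hf : StrictAntiOn f (Icc a b)) (hcont : ContinuousOn f (Icc a b)) (hac : a ≤ c) (hcb : c ≤ b)
    (ha : 0 < f a) (hc : f c < 0) :
    ∃! x, x ∈ Ioo a c ∧ f x = 0 ∧ (∀ y ∈ Ioo a x, 0 < f y) ∧ ∀ y ∈ Ioo x b, f y < 0 := by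
  obtain ⟨x, hx, hfx⟩ :=
    intermediate_value_Ioo' hac (hcont.mono (Icc_subset_Icc_right hcb)) ⟨hc, ha⟩
  have hxab : x ∈ Icc a b := ⟨hx.1.le, hx.2.le.trans hcb⟩
  refine ⟨x, ⟨hx, hfx, fun y hy => ?_, fun y hy => ?_⟩, fun y ⟨hy, hfy, _⟩ => ?_⟩
  · exact hfx ▸ hf ⟨hy.1.le, hy.2.le.trans hxab.2⟩ hxab hy.2
  · exact hfx ▸ hf hxab ⟨hxab.1.trans hy.1.le, hy.2.le⟩ hy.1
  · exact hf.injOn ⟨hy.1.le, hy.2.le.trans hcb⟩ hxab (hfy.trans hfx.symm)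

theorem stmt_7 (γ : ℝ) (hγ1 : 1 < γ) (hγ3 : γ < 3) :
    ∃! M₀ : ℝ, M₀ ∈ Set.Ioo (-1 : ℝ) 0 ∧
      (3*γ^2-9*γ)*M₀^2 + (-2*γ^2-10*γ)*M₀ + (-5*γ^2+γ-2) = 0 ∧
      (∀ M ∈ Set.Ioo (-1 : ℝ) M₀,
        0 < (3*γ^2-9*γ)*M^2 + (-2*γ^2-10*γ)*M + (-5*γ^2+γ-2)) ∧
      (∀ M ∈ Set.Ioo M₀ (1 : ℝ),
        (3*γ^2-9*γ)*M^2 + (-2*γ^2-10*γ)*M + (-5*γ^2+γ-2) < 0) := by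
  have hlead : 3*γ^2-9*γ < 0 := by nlinarith
  have hanti := strictAntiOn_quadratic_Ici (c := -5*γ^2+γ-2) hlead
    (show 2 * (3*γ^2-9*γ) * (-1) + (-2*γ^2-10*γ) ≤ 0 by nlinarith)
  exact StrictAntiOn.existsUnique_sign_change (hanti.mono Icc_subset_Ici_self) (by fun_prop)
    (by norm_num) (by norm_num) (by nlinarith) (by nlinarith)
end

section
/- For all real γ > 1 and all real M with -1 < M < 1, the polynomial P_T(M) = 3(γ²+γ+2) - (γ-1)γM⁴ - 2(γ²-4γ+3)M² + 12γM is strictly positive. -/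
/-!
Since `M⁴ ≤ M²` on `[-1, 1]` and `(γ - 1)γ ≥ 0`, the quartic `P_T` is bounded below by the
quadratic `Q(M) = 3(γ² + γ + 2) + 12γM - 3(γ - 1)(γ - 2)M²`. This quadratic vanishes at
`M = -1`, and `Q(M) = 3(M + 1)(4γ + (γ - 1)(γ - 2)(1 - M))`; the second factor is affine in
`1 - M ∈ [0, 2]` with the positive endpoint values `4γ` and `2(γ² - γ + 2)`.
-/

namespace AUSM

/-- The bracketed factor `P_T(M)` of the trace of `∂F⁺/∂U`. -/
def traceFactor (γ M : ℝ) : ℝ :=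
  3*(γ^2+γ+2) - (γ-1)*γ*M^4 - 2*(γ^2-4*γ+3)*M^2 + 12*γ*M

def traceFactorLowerBound (γ M : ℝ) : ℝ :=
  3*(γ^2+γ+2) + 12*γ*M - 3*(γ-1)*(γ-2)*M^2

theorem pow_four_le_sq {M : ℝ} (hM : M ^ 2 ≤ 1) : M ^ 4 ≤ M ^ 2 := by
  calc M ^ 4 = (M ^ 2) ^ 2 := by ring
    _ ≤ M ^ 2 := pow_le_of_le_one (sq_nonneg M) hM two_ne_zero

theorem traceFactorLowerBound_le {γ M : ℝ} (hγ : 1 ≤ γ) (hM : M ^ 2 ≤ 1) :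
    traceFactorLowerBound γ M ≤ traceFactor γ M := by
  have hcoef : 0 ≤ (γ - 1) * γ := mul_nonneg (by linarith) (by linarith)
  have := mul_le_mul_of_nonneg_left (pow_four_le_sq hM) hcoef
  unfold traceFactor traceFactorLowerBound
  linarith

theorem traceFactorLowerBound_eq (γ M : ℝ) :
    traceFactorLowerBound γ M = 3 * (M + 1) * (4 * γ + (γ - 1) * (γ - 2) * (1 - M)) := by
  unfold traceFactorLowerBound
  ring

theorem four_mul_add_mul_pos {γ t : ℝ} (hγ : 0 < γ) (ht₀ : 0 ≤ t) (ht₂ : t ≤ 2) :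
    0 < 4 * γ + (γ - 1) * (γ - 2) * t := by
  have hend : 0 < γ ^ 2 - γ + 2 := by nlinarith [sq_nonneg (γ - 1 / 2)]
  calc 0 < (1 - t / 2) * (4 * γ) + t / 2 * (2 * (γ ^ 2 - γ + 2)) := by
        rcases ht₀.eq_or_lt with rfl | ht
        · linarith
        · have : 0 ≤ 1 - t / 2 := by linarith
          positivity
    _ = 4 * γ + (γ - 1) * (γ - 2) * t := by ring

theorem traceFactorLowerBound_pos {γ M : ℝ} (hγ : 0 < γ) (hM₁ : -1 < M) (hM₂ : M ≤ 1) :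
    0 < traceFactorLowerBound γ M := by
  rw [traceFactorLowerBound_eq]
  have := four_mul_add_mul_pos hγ (t := 1 - M) (by linarith) (by linarith)
  have : 0 < M + 1 := by linarith
  positivity

end AUSM

theorem stmt_10 (γ M : ℝ) (hγ : 1 < γ) (hM1 : -1 < M) (hM2 : M < 1) :
    0 < 3*(γ^2+γ+2) - (γ-1)*γ*M^4 - 2*(γ^2-4*γ+3)*M^2 + 12*γ*M := by
  have hM : M ^ 2 ≤ 1 := by nlinarith
  show 0 < AUSM.traceFactor γ M
  exact (AUSM.traceFactorLowerBound_pos (by linarith) hM1 hM2.le).trans_le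
    (AUSM.traceFactorLowerBound_le hγ.le hM)
end

section
/- For all real γ > 1 and all real M with -1 < M < 1, the cubic R(γ,M) = -5γ²-2γ + (γ-1)γM³ + (γ-1)γM² + (3γ²-4γ+3)M - 3 is strictly negative. -/
/-!
Since `R(γ, 1) = -8γ`, it suffices that `R(γ, 1) - R(γ, M)` is positive for `M < 1`. This difference
factors as `(1 - M) * ((γ - 1)γ((M + 1)² + 1) + 3γ² - 4γ + 3)`, and the second factor is positive for
`γ ≥ 1` because `3γ² - 4γ + 3` has negative discriminant.
-/

/-- The cubic `R(γ, M)` of the AUSM split-flux analysis. -/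
def ausmCubic (γ M : ℝ) : ℝ :=
  -5*γ^2 - 2*γ + (γ-1)*γ*M^3 + (γ-1)*γ*M^2 + (3*γ^2-4*γ+3)*M - 3

lemma ausmCubic_one (γ : ℝ) : ausmCubic γ 1 = -8 * γ := by
  unfold ausmCubic; ring

lemma ausmCubic_one_sub (γ M : ℝ) :
    ausmCubic γ 1 - ausmCubic γ M =
      (1 - M) * ((γ - 1) * γ * ((M + 1)^2 + 1) + (3*γ^2 - 4*γ + 3)) := by
  unfold ausmCubic; ring

lemma three_mul_sq_sub_four_mul_add_three_pos (γ : ℝ) : 0 < 3*γ^2 - 4*γ + 3 := by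
  nlinarith [sq_nonneg (3*γ - 2)]

lemma ausmCubic_lt_ausmCubic_one {γ M : ℝ} (hγ : 1 ≤ γ) (hM : M < 1) :
    ausmCubic γ M < ausmCubic γ 1 := by
  have hsummand : 0 ≤ (γ - 1) * γ * ((M + 1)^2 + 1) := by
    have := sub_nonneg.2 hγ
    positivity
  rw [← sub_pos, ausmCubic_one_sub]
  exact mul_pos (sub_pos.2 hM) (by linarith [three_mul_sq_sub_four_mul_add_three_pos γ])

theorem stmt_13_general (γ M : ℝ) (hγ : 1 < γ) (hM2 : M < 1) :
    -5*γ^2 - 2*γ + (γ-1)*γ*M^3 + (γ-1)*γ*M^2 + (3*γ^2-4*γ+3)*M - 3 < 0 := by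
  change ausmCubic γ M < 0
  calc ausmCubic γ M < ausmCubic γ 1 := ausmCubic_lt_ausmCubic_one hγ.le hM2
    _ = -8 * γ := ausmCubic_one γ
    _ < 0 := by linarith

theorem stmt_13 (γ M : ℝ) (hγ : 1 < γ) (hM1 : -1 < M) (hM2 : M < 1) :
    -5*γ^2 - 2*γ + (γ-1)*γ*M^3 + (γ-1)*γ*M^2 + (3*γ^2-4*γ+3)*M - 3 < 0 :=
  stmt_13_general γ M hγ hM2
end
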